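/- A q-matroid M=(E,ρ) has exactly one cyclic flat if and only if M is (equivalent to) the direct sum of a trivial and a free q-matroid; precisely, with l=dim cl(0) and f=dim E − l, Z(M)={cl(0)} if and only if M ≈ U_{0,l} ⊕ U_{f,f}. -/

import Mathlib

open Submodule Module

namespace QM

variable (F : Type*) {E : Type*} [Field F] [AddCommGroup E] [Module F E]

/-- The rank axioms (R1)-(R3) of a q-matroid. -/
def IsRkFn (ρ : Submodule F E → ℕ) : Prop :=
  (∀ V : Submodule F E, ρ V ≤ finrank F V) ∧
  (∀ ⦃V W : Submodule F E⦄, V ≤ W → ρ V ≤ ρ W) ∧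
  (∀ V W : Submodule F E, ρ (V ⊔ W) + ρ (V ⊓ W) ≤ ρ V + ρ W)

variable {F}

/-- Independent spaces. -/
def Indep (ρ : Submodule F E → ℕ) (V : Submodule F E) : Prop := ρ V = finrank F V

/-- Circuits: dependent spaces all of whose proper subspaces are independent. -/
def IsCircuit (ρ : Submodule F E → ℕ) (C : Submodule F E) : Prop :=
  ¬ Indep ρ C ∧ ∀ D : Submodule F E, D < C → Indep ρ D

/-- Open spaces: sums of circuits. -/
def IsOpenSp (ρ : Submodule F E → ℕ) (V : Submodule F E) : Prop :=
  ∃ S : Set (Submodule F E), (∀ C ∈ S, IsCircuit ρ C) ∧ V = sSup S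

/-- The cyclic core: the sum of all circuits contained in `V`. -/
def cyc (ρ : Submodule F E → ℕ) (V : Submodule F E) : Submodule F E :=
  sSup {C : Submodule F E | IsCircuit ρ C ∧ C ≤ V}

/-- The closure operator: the sum of all `⟨x⟩` with `ρ(V + ⟨x⟩) = ρ V`. -/
def cl (ρ : Submodule F E → ℕ) (V : Submodule F E) : Submodule F E :=
  sSup {W : Submodule F E | ∃ x : E, ρ (V ⊔ span F {x}) = ρ V ∧ W = span F {x}}

/-- Flats. -/
def IsFlat (ρ : Submodule F E → ℕ) (V : Submodule F E) : Prop :=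
  ∀ x : E, x ∉ V → ρ V < ρ (V ⊔ span F {x})

/-- Cyclic flats. -/
def CyclicFlat (ρ : Submodule F E → ℕ) (V : Submodule F E) : Prop :=
  IsFlat ρ V ∧ IsOpenSp ρ V

end QM

namespace QM

variable {F E₁ E₂ : Type*} [Field F] [AddCommGroup E₁] [Module F E₁]
  [AddCommGroup E₂] [Module F E₂]

/-- The rank function of the direct sum `M₁ ⊕ M₂` on `E₁ × E₂`:
`ρ(V) = dim V + min { ρ₁(π₁ X) + ρ₂(π₂ X) − dim X : X ≤ V }`
(written in `ℕ` as `min { ρ₁(π₁ X) + ρ₂(π₂ X) + (dim V − dim X) : X ≤ V }`,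
which agrees since `dim X ≤ dim V`). -/
noncomputable def dsRank (ρ₁ : Submodule F E₁ → ℕ) (ρ₂ : Submodule F E₂ → ℕ)
    (V : Submodule F (E₁ × E₂)) : ℕ :=
  sInf {n : ℕ | ∃ X : Submodule F (E₁ × E₂), X ≤ V ∧
    n = ρ₁ (X.map (LinearMap.fst F E₁ E₂)) + ρ₂ (X.map (LinearMap.snd F E₁ E₂)) +
      (finrank F V - finrank F X)}

end QM

/-!
If `L = cl(0)` is the only cyclic flat, then every circuit lies in `L`: a circuit is open, and an
open space that is not a flat can be enlarged by a further circuit until it becomes a cyclic flat.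
So a complement `W` of `V ⊓ L` in `V` is independent, while `L` has rank `0`; hence
`ρ V = dim V - dim (V ⊓ L)`, which is the rank function of `U_{0,l} ⊕ U_{f,f}` in coordinates
adapted to a splitting `E = L ⊕ L'`. Conversely, for this rank function the circuits are exactly
the lines of `L`, so `L` is both the space of loops and the only cyclic flat.
-/

namespace QM

section RankFunction

variable {F E : Type*} [Field F] [AddCommGroup E] [Module F E] {ρ : Submodule F E → ℕ}

theorem IsRkFn.le_finrank (hρ : IsRkFn F ρ) (V : Submodule F E) : ρ V ≤ finrank F V :=
  hρ.1 V

theorem IsRkFn.mono (hρ : IsRkFn F ρ) {V W : Submodule F E} (h : V ≤ W) : ρ V ≤ ρ W :=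
  hρ.2.1 h

theorem IsRkFn.submod (hρ : IsRkFn F ρ) (V W : Submodule F E) :
    ρ (V ⊔ W) + ρ (V ⊓ W) ≤ ρ V + ρ W :=
  hρ.2.2 V W

theorem IsRkFn.rank_bot (hρ : IsRkFn F ρ) : ρ ⊥ = 0 :=
  Nat.le_zero.mp (by simpa using hρ.le_finrank ⊥)

theorem IsRkFn.rank_sup_le (hρ : IsRkFn F ρ) (V W : Submodule F E) :
    ρ (V ⊔ W) ≤ ρ V + ρ W :=
  (Nat.le_add_right _ _).trans (hρ.submod V W)

theorem IsRkFn.indep_bot (hρ : IsRkFn F ρ) : Indep ρ (⊥ : Submodule F E) := by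
  simp [Indep, hρ.rank_bot]

theorem cl_bot_eq_span (h0 : ρ ⊥ = 0) : cl ρ ⊥ = span F {x | ρ (span F {x}) = 0} := by
  rw [span_eq_iSup_of_singleton_spans, ← sSup_image, cl]
  congr 1
  ext W
  simp [h0, eq_comm]

theorem IsRkFn.mem_cl_bot_iff (hρ : IsRkFn F ρ) {x : E} :
    x ∈ cl ρ ⊥ ↔ ρ (span F {x}) = 0 := by
  rw [cl_bot_eq_span hρ.rank_bot]
  refine ⟨fun hx => ?_, fun hx => subset_span hx⟩
  induction hx using span_induction with
  | mem y hy => exact hy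
  | zero => rw [span_zero_singleton, hρ.rank_bot]
  | add a b _ _ ha hb =>
    have hab : span F {a + b} ≤ span F {a} ⊔ span F {b} :=
      (span_singleton_le_iff_mem _ _).mpr <| add_mem
        (mem_sup_left (mem_span_singleton_self a)) (mem_sup_right (mem_span_singleton_self b))
    have := (hρ.mono hab).trans (hρ.rank_sup_le _ _)
    omega
  | smul c a _ ha => exact Nat.le_zero.mp (ha ▸ hρ.mono (span_singleton_smul_le F c a))

theorem IsCircuit.isOpenSp {C : Submodule F E} (hC : IsCircuit ρ C) : IsOpenSp ρ C :=
  ⟨{C}, by simpa using hC, sSup_singleton.symm⟩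

theorem IsOpenSp.sup_isCircuit {U C : Submodule F E} (hU : IsOpenSp ρ U)
    (hC : IsCircuit ρ C) : IsOpenSp ρ (U ⊔ C) := by
  obtain ⟨S, hS, rfl⟩ := hU
  refine ⟨insert C S, ?_, by rw [sSup_insert, sup_comm]⟩
  rintro C' (rfl | hC')
  exacts [hC, hS C' hC']

variable [FiniteDimensional F E]

theorem IsRkFn.rank_sup_eq_of_rank_sup_span_eq (hρ : IsRkFn F ρ) {A Y : Submodule F E}
    (h : ∀ y ∈ Y, ρ (A ⊔ span F {y}) = ρ A) : ρ (A ⊔ Y) = ρ A := by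
  induction A using WellFoundedGT.induction with
  | _ A ih =>
  by_cases hYA : Y ≤ A
  · rw [sup_eq_left.mpr hYA]
  obtain ⟨y, hyY, hyA⟩ := SetLike.not_le_iff_exists.mp hYA
  set A' := A ⊔ span F {y}
  have hAA' : A < A' := left_lt_sup.mpr (by rwa [span_singleton_le_iff_mem])
  have h' : ∀ z ∈ Y, ρ (A' ⊔ span F {z}) = ρ A' := by
    intro z hz
    have hsub := hρ.submod A' (A ⊔ span F {z})
    rw [show A' ⊔ (A ⊔ span F {z}) = A' ⊔ span F {z} by
      rw [← sup_assoc, sup_eq_left.mpr (le_sup_left : A ≤ A')]] at hsub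
    have := hρ.mono (le_inf le_sup_left le_sup_left : A ≤ A' ⊓ (A ⊔ span F {z}))
    have := hρ.mono (le_sup_left : A' ≤ A' ⊔ span F {z})
    have := h y hyY
    have := h z hz
    omega
  calc ρ (A ⊔ Y) = ρ (A' ⊔ Y) := by
        rw [sup_assoc, sup_eq_right.mpr ((span_singleton_le_iff_mem y Y).mpr hyY)]
    _ = ρ A' := ih A' hAA' h'
    _ = ρ A := h y hyY

theorem IsRkFn.rank_cl_bot (hρ : IsRkFn F ρ) : ρ (cl ρ ⊥) = 0 := by
  have := hρ.rank_sup_eq_of_rank_sup_span_eq (A := ⊥) (Y := cl ρ ⊥) fun y hy => by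
    rw [bot_sup_eq, hρ.rank_bot]
    exact hρ.mem_cl_bot_iff.mp hy
  rwa [bot_sup_eq, hρ.rank_bot] at this

theorem IsRkFn.indep_of_le (hρ : IsRkFn F ρ) {D I : Submodule F E} (hDI : D ≤ I)
    (hI : Indep ρ I) : Indep ρ D := by
  obtain ⟨W, hdisj, hsup⟩ := IsModularLattice.exists_disjoint_and_sup_eq hDI
  have hdim := finrank_sup_add_finrank_inf_eq D W
  rw [hsup, hdisj.eq_bot, finrank_bot] at hdim
  have := hρ.rank_sup_le D W
  rw [hsup] at this
  have := hρ.le_finrank D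
  have := hρ.le_finrank W
  unfold Indep at *
  omega

theorem exists_isCircuit_le {D : Submodule F E} (hD : ¬ Indep ρ D) :
    ∃ C ≤ D, IsCircuit ρ C := by
  induction D using WellFoundedLT.induction with
  | _ D ih =>
  by_cases hmin : ∀ D' < D, Indep ρ D'
  · exact ⟨D, le_rfl, hD, hmin⟩
  push Not at hmin
  obtain ⟨D', hD'D, hD'⟩ := hmin
  obtain ⟨C, hCD', hC⟩ := ih D' hD'D hD'
  exact ⟨C, hCD'.trans hD'D.le, hC⟩

theorem IsRkFn.exists_indep_le_rank_eq (hρ : IsRkFn F ρ) (U : Submodule F E) :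
    ∃ I ≤ U, Indep ρ I ∧ ρ I = ρ U := by
  suffices ∀ I ≤ U, Indep ρ I → ∃ I' ≤ U, Indep ρ I' ∧ ρ I' = ρ U from
    this ⊥ bot_le hρ.indep_bot
  intro I
  induction I using WellFoundedGT.induction with
  | _ I ih =>
  intro hIU hI
  by_cases hU : ∀ x ∈ U, ρ (I ⊔ span F {x}) = ρ I
  · refine ⟨I, hIU, hI, ?_⟩
    rw [← hρ.rank_sup_eq_of_rank_sup_span_eq hU, sup_eq_right.mpr hIU]
  push Not at hU
  obtain ⟨x, hxU, hx⟩ := hU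
  have hxI : ¬ span F {x} ≤ I := fun h => hx (by rw [sup_eq_left.mpr h])
  refine ih _ (left_lt_sup.mpr hxI) (sup_le hIU ((span_singleton_le_iff_mem x U).mpr hxU)) ?_
  -- the rank goes up by at least one and the dimension by at most one
  have hrank : ρ I < ρ (I ⊔ span F {x}) := (hρ.mono le_sup_left).lt_of_ne (Ne.symm hx)
  have hdim := finrank_add_le_finrank_add_finrank I (span F {x})
  have hline : finrank F (span F {x}) ≤ 1 := by
    simpa using finrank_span_le_card (R := F) ({x} : Set E)
  have := hρ.le_finrank (I ⊔ span F {x})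
  unfold Indep at hI ⊢
  omega

theorem IsRkFn.exists_isCircuit_not_le (hρ : IsRkFn F ρ) {U : Submodule F E}
    (hU : ¬ IsFlat ρ U) : ∃ C, IsCircuit ρ C ∧ ¬ C ≤ U := by
  obtain ⟨x, hxU, hx⟩ : ∃ x, x ∉ U ∧ ρ (U ⊔ span F {x}) ≤ ρ U := by
    simpa [IsFlat] using hU
  obtain ⟨I, hIU, hI, hIrank⟩ := hρ.exists_indep_le_rank_eq U
  have hxI : ¬ span F {x} ≤ I := fun h =>
    hxU (hIU ((span_singleton_le_iff_mem x I).mp h))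
  have hdep : ¬ Indep ρ (I ⊔ span F {x}) := by
    intro hind
    have := hρ.mono (sup_le_sup_right hIU (span F {x}))
    have := finrank_lt_finrank_of_lt (left_lt_sup.mpr hxI)
    unfold Indep at hI hind
    omega
  obtain ⟨C, hCI, hC⟩ := exists_isCircuit_le hdep
  refine ⟨C, hC, fun hCU => hC.1 (hρ.indep_of_le ?_ hI)⟩
  calc C ≤ (I ⊔ span F {x}) ⊓ U := le_inf hCI hCU
    _ = I := by
      have hx0 : x ≠ 0 := fun h => hxU (h ▸ U.zero_mem)
      rw [sup_inf_assoc_of_le _ hIU, inf_comm, ((disjoint_span_singleton' hx0).mpr hxU).eq_bot,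
        sup_bot_eq]

theorem IsRkFn.exists_cyclicFlat_ge (hρ : IsRkFn F ρ) {U : Submodule F E}
    (hU : IsOpenSp ρ U) : ∃ Z, U ≤ Z ∧ CyclicFlat ρ Z := by
  induction U using WellFoundedGT.induction with
  | _ U ih =>
  by_cases hflat : IsFlat ρ U
  · exact ⟨U, le_rfl, hflat, hU⟩
  obtain ⟨C, hC, hCU⟩ := hρ.exists_isCircuit_not_le hflat
  obtain ⟨Z, hUZ, hZ⟩ := ih (U ⊔ C) (left_lt_sup.mpr hCU) (hU.sup_isCircuit hC)
  exact ⟨Z, le_sup_left.trans hUZ, hZ⟩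

theorem IsRkFn.indep_of_disjoint (hρ : IsRkFn F ρ) {L W : Submodule F E}
    (hL : ∀ Z, CyclicFlat ρ Z → Z ≤ L) (hW : Disjoint W L) : Indep ρ W := by
  by_contra hdep
  obtain ⟨C, hCW, hC⟩ := exists_isCircuit_le hdep
  obtain ⟨Z, hCZ, hZ⟩ := hρ.exists_cyclicFlat_ge hC.isOpenSp
  have hCbot : C = ⊥ := disjoint_self.mp (hW.mono hCW (hCZ.trans (hL Z hZ)))
  exact hC.1 (hCbot ▸ hρ.indep_bot)

end RankFunction

section TrivialFreeSum

variable {F E : Type*} [Field F] [AddCommGroup E] [Module F E]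
  {ρ : Submodule F E → ℕ} {L : Submodule F E}

/-- `ρ` is the rank function of `U_{0,l} ⊕ U_{f,f}`, with `L` carrying the trivial summand. -/
def IsTrivialFreeSum (ρ : Submodule F E → ℕ) (L : Submodule F E) : Prop :=
  ∀ V : Submodule F E, ρ V = finrank F V - finrank F ↥(V ⊓ L)

theorem IsTrivialFreeSum.comap {E' : Type*} [AddCommGroup E'] [Module F E']
    (h : IsTrivialFreeSum ρ L) (α : E' ≃ₗ[F] E) :
    IsTrivialFreeSum (fun V => ρ (V.map α.toLinearMap)) (L.comap α.toLinearMap) := by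
  intro V
  show ρ (V.map α.toLinearMap) = _
  rw [h, ← map_comap_eq_of_surjective α.surjective L, ← map_inf _ α.injective,
    LinearEquiv.finrank_map_eq, LinearEquiv.finrank_map_eq,
    map_comap_eq_of_surjective α.surjective]

variable [FiniteDimensional F E]

namespace IsTrivialFreeSum

theorem rank_eq_zero_iff (h : IsTrivialFreeSum ρ L) {V : Submodule F E} :
    ρ V = 0 ↔ V ≤ L := by
  have := finrank_mono (inf_le_left : V ⊓ L ≤ V)
  rw [h, ← inf_eq_left]
  refine ⟨fun hV => eq_of_le_of_finrank_le inf_le_left (by omega), fun hV => ?_⟩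
  rw [hV, Nat.sub_self]

theorem indep_iff (h : IsTrivialFreeSum ρ L) {D : Submodule F E} :
    Indep ρ D ↔ Disjoint D L := by
  have := finrank_mono (inf_le_left : D ⊓ L ≤ D)
  rw [Indep, h, disjoint_iff, ← finrank_eq_zero]
  omega

theorem isCircuit_iff (h : IsTrivialFreeSum ρ L) {C : Submodule F E} :
    IsCircuit ρ C ↔ ∃ z ≠ 0, z ∈ L ∧ C = span F {z} := by
  simp only [IsCircuit, h.indep_iff]
  constructor
  · rintro ⟨hCL, hmin⟩
    obtain ⟨z, hzC, hzL, hz0⟩ : ∃ z ∈ C, z ∈ L ∧ z ≠ 0 := by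
      simpa [disjoint_def] using hCL
    refine ⟨z, hz0, hzL, ?_⟩
    by_contra hne
    have hlt : span F {z} < C := ((span_singleton_le_iff_mem z C).mpr hzC).lt_of_ne' hne
    exact (disjoint_span_singleton' hz0).mp (hmin _ hlt).symm hzL
  · rintro ⟨z, hz0, hzL, rfl⟩
    refine ⟨?_, fun D hD => ?_⟩
    · rw [disjoint_comm, disjoint_span_singleton' hz0]
      exact not_not_intro hzL
    · have := finrank_lt_finrank_of_lt hD
      rw [finrank_span_singleton hz0, Nat.lt_one_iff, finrank_eq_zero] at this
      exact this ▸ disjoint_bot_left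

theorem cyclicFlat_iff (h : IsTrivialFreeSum ρ L) {Z : Submodule F E} :
    CyclicFlat ρ Z ↔ Z = L := by
  have hline : ∀ x, x ∈ L ↔ span F {x} ≤ L := fun x => (span_singleton_le_iff_mem x L).symm
  constructor
  · rintro ⟨hflat, S, hS, rfl⟩
    have hSL : sSup S ≤ L := sSup_le fun C hC => by
      obtain ⟨z, -, hzL, rfl⟩ := h.isCircuit_iff.mp (hS C hC)
      exact (hline z).mp hzL
    refine hSL.antisymm fun x hxL => by_contra fun hxS => ?_
    have := hflat x hxS
    rw [h.rank_eq_zero_iff.mpr (sup_le hSL ((hline x).mp hxL))] at this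
    omega
  · rintro rfl
    refine ⟨fun x hx => ?_, {C | IsCircuit ρ C}, fun _ hC => hC, ?_⟩
    · rw [h.rank_eq_zero_iff.mpr le_rfl, Nat.pos_iff_ne_zero, Ne, h.rank_eq_zero_iff]
      exact fun hle => hx (hle (mem_sup_right (mem_span_singleton_self x)))
    · refine le_antisymm (fun x hx => ?_) (sSup_le fun C hC => ?_)
      · rcases eq_or_ne x 0 with rfl | hx0
        · exact zero_mem _
        · have hC : span F {x} ∈ {C | IsCircuit ρ C} :=
            h.isCircuit_iff.mpr ⟨x, hx0, hx, rfl⟩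
          exact le_sSup hC (mem_span_singleton_self x)
      · obtain ⟨z, -, hzL, rfl⟩ := h.isCircuit_iff.mp hC
        exact (hline z).mp hzL

theorem cl_bot_eq (h : IsTrivialFreeSum ρ L) : cl ρ ⊥ = L := by
  rw [cl_bot_eq_span (h.rank_eq_zero_iff.mpr bot_le)]
  conv_rhs => rw [← span_eq L]
  congr 1
  ext x
  exact h.rank_eq_zero_iff.trans (span_singleton_le_iff_mem x L)

end IsTrivialFreeSum

theorem IsRkFn.isTrivialFreeSum_cl_bot (hρ : IsRkFn F ρ)
    (h : ∀ Z, CyclicFlat ρ Z → Z = cl ρ ⊥) : IsTrivialFreeSum ρ (cl ρ ⊥) := by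
  intro V
  set L := cl ρ ⊥
  obtain ⟨W, hdisj, hsup⟩ :=
    IsModularLattice.exists_disjoint_and_sup_eq (inf_le_left : V ⊓ L ≤ V)
  have hdim := finrank_sup_add_finrank_inf_eq (V ⊓ L) W
  rw [hsup, hdisj.eq_bot, finrank_bot] at hdim
  have hWV : W ≤ V := hsup ▸ le_sup_right
  have hWL : Disjoint W L := by
    rw [disjoint_def] at hdisj ⊢
    exact fun x hxW hxL => hdisj x ⟨hWV hxW, hxL⟩ hxW
  have hW : Indep ρ W := hρ.indep_of_disjoint (fun Z hZ => (h Z hZ).le) hWL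
  have hle : ρ V ≤ finrank F W := calc
    ρ V ≤ ρ (W ⊔ L) :=
      hρ.mono (hsup ▸ sup_le (inf_le_right.trans le_sup_right) le_sup_left)
    _ ≤ ρ W + ρ L := hρ.rank_sup_le W L
    _ = finrank F W := by rw [hρ.rank_cl_bot, add_zero, hW]
  have hge : finrank F W ≤ ρ V := hW ▸ hρ.mono hWV
  omega

end TrivialFreeSum

section DirectSum

variable {F E E₁ E₂ : Type*} [Field F] [AddCommGroup E] [Module F E]
  [AddCommGroup E₁] [Module F E₁] [AddCommGroup E₂] [Module F E₂]

theorem finrank_map_add_finrank_inf_ker [FiniteDimensional F E₁] (f : E₁ →ₗ[F] E₂)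
    (X : Submodule F E₁) :
    finrank F (X.map f) + finrank F ↥(X ⊓ LinearMap.ker f) = finrank F X := by
  have h := LinearMap.finrank_range_add_finrank_ker (f.domRestrict X)
  rwa [LinearMap.range_domRestrict, LinearMap.ker_domRestrict, ← finrank_map_subtype_eq,
    map_comap_subtype] at h

theorem isTrivialFreeSum_dsRank [FiniteDimensional F E₁] [FiniteDimensional F E₂] :
    IsTrivialFreeSum (dsRank (fun _ => (0 : ℕ)) (fun W : Submodule F E₂ => finrank F W))
      (LinearMap.ker (LinearMap.snd F E₁ E₂)) := by
  intro V
  have hX := finrank_map_add_finrank_inf_ker (LinearMap.snd F E₁ E₂)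
  set K := LinearMap.ker (LinearMap.snd F E₁ E₂)
  dsimp only [dsRank]
  apply le_antisymm
  · refine Nat.sInf_le ⟨V ⊓ K, inf_le_left, ?_⟩
    have := hX (V ⊓ K)
    rw [inf_assoc, inf_idem] at this
    omega
  · refine le_csInf ⟨_, ⊥, bot_le, rfl⟩ ?_
    rintro n ⟨X, hXV, rfl⟩
    have := hX X
    have := finrank_mono (inf_le_inf_right K hXV)
    have := finrank_mono hXV
    omega

theorem exists_linearEquiv_comap_ker_snd [FiniteDimensional F E] (L : Submodule F E) :
    ∃ α : E ≃ₗ[F] (Fin (finrank F L) → F) × (Fin (finrank F E - finrank F L) → F),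
      (LinearMap.ker (LinearMap.snd F _ _)).comap α.toLinearMap = L := by
  obtain ⟨L', hc⟩ := L.exists_isCompl
  have hdim := finrank_add_eq_of_isCompl hc
  let eL := LinearEquiv.ofFinrankEq (R := F) L (Fin (finrank F L) → F) (finrank_fin_fun F).symm
  let eL' := LinearEquiv.ofFinrankEq (R := F) L' (Fin (finrank F E - finrank F L) → F)
    (by rw [finrank_fin_fun]; omega)
  refine ⟨(L.prodEquivOfIsCompl L' hc).symm ≪≫ₗ eL.prodCongr eL', ?_⟩
  ext x
  simp

end DirectSum

end QM

namespace QM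

variable {F E : Type*} [Field F] [Fintype F] [AddCommGroup E] [Module F E]
  [FiniteDimensional F E]

theorem stmt19 (ρ : Submodule F E → ℕ) (hρ : IsRkFn F ρ) :
    (∀ Z : Submodule F E, CyclicFlat ρ Z ↔ Z = cl ρ ⊥) ↔
      ∃ α : E ≃ₗ[F]
          (Fin (finrank F ↥(cl ρ ⊥)) → F) ×
          (Fin (finrank F E - finrank F ↥(cl ρ ⊥)) → F),
        ∀ V : Submodule F E,
          ρ V = dsRank (fun _ => (0 : ℕ)) (fun W => finrank F W)
            (V.map α.toLinearMap) := by
  constructor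
  · intro h
    obtain ⟨α, hα⟩ := exists_linearEquiv_comap_ker_snd (cl ρ ⊥)
    have hsum := isTrivialFreeSum_dsRank.comap α
    rw [hα] at hsum
    exact ⟨α, fun V => (hρ.isTrivialFreeSum_cl_bot (fun Z => (h Z).mp) V).trans (hsum V).symm⟩
  · rintro ⟨α, hα⟩
    have h : IsTrivialFreeSum ρ ((LinearMap.ker (LinearMap.snd F _ _)).comap α.toLinearMap) :=
      fun V => (hα V).trans (isTrivialFreeSum_dsRank.comap α V)
    simp only [h.cyclicFlat_iff, h.cl_bot_eq, implies_true]

end QM
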